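/- arXiv:cs/0508112 — 9 statements merged into one kernel-verified Lean document; each statement's English description precedes it below -/
import Mathlib

section
/- For every clique set cl, the concretization of the star union of cl equals the star union of the concretization of cl: ↓(cl*) = (↓cl)*. -/
variable {V : Type*} [DecidableEq V]

/-- `℘⁰(C)`: the set of nonempty subsets of a finite set `C`. -/
def pow0 (C : Finset V) : Set (Finset V) := {u | u ⊆ C ∧ u ≠ ∅}

/-- Concretization of a clique set: `↓cl = ⋃_{C ∈ cl} ℘⁰(C)`. -/
def conc (cl : Set (Finset V)) : Set (Finset V) := ⋃ C ∈ cl, pow0 C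

/-- Binary union: `s₁ ⊎ s₂ = {a ∪ b : a ∈ s₁, b ∈ s₂}`. -/
def bin (s₁ s₂ : Set (Finset V)) : Set (Finset V) :=
  {u | ∃ a ∈ s₁, ∃ b ∈ s₂, u = a ∪ b}

/-- Star union: all unions `⋃ T` over finite nonempty subfamilies `T ⊆ s`. -/
def starU (s : Set (Finset V)) : Set (Finset V) :=
  {u | ∃ T : Finset (Finset V), T.Nonempty ∧ ↑T ⊆ s ∧ u = T.sup id}

/-- `s_G`: the part of `s` relevant to `G` (groups intersecting `G`). -/
def relG (G : Finset V) (s : Set (Finset V)) : Set (Finset V) :=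
  {u ∈ s | u ∩ G ≠ ∅}

/-- `rel̄(S, cl) = {C \ S : C ∈ cl} \ {∅}`. -/
def relbar (S : Finset V) (cl : Set (Finset V)) : Set (Finset V) :=
  {d | (∃ C ∈ cl, d = C \ S) ∧ d ≠ ∅}

/-- `project(G, s) = {u ∩ G : u ∈ s} \ {∅}`. -/
def sproject (G : Finset V) (s : Set (Finset V)) : Set (Finset V) :=
  {d | (∃ u ∈ s, d = u ∩ G) ∧ d ≠ ∅}

/-- Abstract unification of the Sharing domain for `x = t`, `T` the variables of `t`. -/
def amgu (x : V) (T : Finset V) (s : Set (Finset V)) : Set (Finset V) :=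
  (s \ relG ({x} ∪ T) s) ∪ bin (starU (relG {x} s)) (starU (relG T s))

/-- The `extend` function of the Sharing domain. -/
def extendSh (Call : Set (Finset V)) (G : Finset V) (Prime : Set (Finset V)) :
    Set (Finset V) :=
  {u ∈ Call | u ∩ G = ∅} ∪ {u ∈ starU (relG G Call) | u ∩ G ∈ Prime}

/-- Union of all groups of `s` containing `x`, as a set of variables. -/
def occSet (s : Set (Finset V)) (x : V) : Set V :=
  ⋃ u ∈ {u ∈ s | x ∈ u}, (↑u : Set V)

omit [DecidableEq V] in
theorem mem_conc_iff {cl : Set (Finset V)} {v : Finset V} :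
    v ∈ conc cl ↔ v.Nonempty ∧ ∃ C ∈ cl, v ⊆ C := by
  simp only [conc, pow0, Set.mem_iUnion, Set.mem_ofPred_eq, Finset.nonempty_iff_ne_empty]
  tauto

theorem sup_mem_starU {ι : Type*} {s : Set (Finset V)} {T : Finset ι} (hT : T.Nonempty)
    {f : ι → Finset V} (hf : ∀ i ∈ T, f i ∈ s) : T.sup f ∈ starU s :=
  ⟨T.image f, hT.image f, by simpa [Set.subset_def] using hf, (Finset.sup_image T f id).symm⟩

theorem Finset.sup_filter_inter_eq_of_subset {T : Finset (Finset V)} {u : Finset V}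
    (hu : u ⊆ T.sup id) : {C ∈ T | (C ∩ u).Nonempty}.sup (· ∩ u) = u := by
  ext x
  simp only [Finset.mem_sup, Finset.mem_filter, Finset.mem_inter]
  constructor
  · rintro ⟨C, -, -, hx⟩
    exact hx
  · intro hx
    obtain ⟨C, hC, hxC⟩ := Finset.mem_sup.1 (hu hx)
    exact ⟨C, ⟨hC, x, Finset.mem_inter.2 ⟨hxC, hx⟩⟩, hxC, hx⟩

theorem conc_starU_subset (cl : Set (Finset V)) : conc (starU cl) ⊆ starU (conc cl) := by
  intro u hu
  obtain ⟨hne, _, ⟨T, -, hTcl, rfl⟩, hsub⟩ := mem_conc_iff.1 hu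
  -- `u` is the union of its traces `C ∩ u` on the cliques `C ∈ T`, and the nonempty traces lie in `↓cl`.
  rw [← Finset.sup_filter_inter_eq_of_subset hsub] at hne ⊢
  obtain ⟨x, hx⟩ := hne
  obtain ⟨C₀, hC₀, -⟩ := Finset.mem_sup.1 hx
  refine sup_mem_starU ⟨C₀, hC₀⟩ fun C hC => ?_
  rw [Finset.mem_filter] at hC
  exact mem_conc_iff.2 ⟨hC.2, C, hTcl hC.1, Finset.inter_subset_left⟩

theorem starU_conc_subset (cl : Set (Finset V)) : starU (conc cl) ⊆ conc (starU cl) := by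
  rintro _ ⟨T, hT, hTcl, rfl⟩
  have hcliques : ∀ t ∈ T, ∃ C ∈ cl, t ⊆ C := fun t ht => (mem_conc_iff.1 (hTcl ht)).2
  choose! f hf hsub using hcliques
  obtain ⟨t, ht⟩ := hT
  have ht_sub : t ⊆ T.sup id := Finset.le_sup (f := id) ht
  exact mem_conc_iff.2 ⟨(mem_conc_iff.1 (hTcl ht)).1.mono ht_sub,
    T.sup f, sup_mem_starU ⟨t, ht⟩ hf, Finset.sup_mono_fun hsub⟩

/-- ↓(cl*) = (↓cl)* for every clique set. -/
theorem conc_starU (cl : Set (Finset V)) :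
    conc (starU cl) = starU (conc cl) :=
  (conc_starU_subset cl).antisymm (starU_conc_subset cl)
end

section
/- Worst-case covering lemma: for every clique set cl, sharing set sh, and finite set G of variables, the star union of the part of ↓cl ∪ sh relevant to G is covered by the pair (cl_G* ∪ (cl_G* ⊎ sh_G*), sh_G*); that is, ((↓cl ∪ sh)_G)* ⊆ ↓(cl_G* ∪ (cl_G* ⊎ sh_G*)) ∪ (sh_G)*. -/
/-! A union of relevant groups splits into the groups drawn from `↓cl` and those drawn from `sh`.
Each group of `↓cl` relevant to `G` lies inside a clique relevant to `G`, so the union of the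
first kind lies inside a member of `cl_G*`, and the whole union inside a member of `cl_G*` or
of `cl_G* ⊎ sh_G*`; it is nonempty since every relevant group meets `G`. If no group of the
first kind occurs, the union is already in `sh_G*`. -/

variable {V : Type*} [DecidableEq V]

theorem mem_conc {α : Type*} {cl : Set (Finset α)} {u : Finset α} :
    u ∈ conc cl ↔ (∃ C ∈ cl, u ⊆ C) ∧ u ≠ ∅ := by
  simp only [conc, pow0, Set.mem_iUnion, Set.mem_ofPred_eq, exists_prop]
  constructor
  · rintro ⟨C, hC, hu, hne⟩
    exact ⟨⟨C, hC, hu⟩, hne⟩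
  · rintro ⟨⟨C, hC, hu⟩, hne⟩
    exact ⟨C, hC, hu, hne⟩

theorem relG_union (G : Finset V) (s t : Set (Finset V)) :
    relG G (s ∪ t) = relG G s ∪ relG G t := by
  ext u
  simp only [relG, Set.mem_union, Set.mem_ofPred_eq]
  tauto

theorem relG_conc_subset_lowerClosure (G : Finset V) (cl : Set (Finset V)) :
    relG G (conc cl) ⊆ lowerClosure (relG G cl) := by
  rintro u ⟨hu, huG⟩
  obtain ⟨⟨C, hC, huC⟩, -⟩ := mem_conc.mp hu
  refine mem_lowerClosure.mpr ⟨C, ⟨hC, fun hCG => huG ?_⟩, huC⟩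
  exact Finset.subset_empty.mp (hCG ▸ Finset.inter_subset_inter_right huC)

theorem ne_empty_of_mem_starU_relG {G : Finset V} {s : Set (Finset V)} {u : Finset V}
    (hu : u ∈ starU (relG G s)) : u ≠ ∅ := by
  obtain ⟨T, ⟨t, ht⟩, hTs, rfl⟩ := hu
  intro h
  have htG : t ∩ G ≠ ∅ := (hTs ht).2
  have htu : t ⊆ T.sup id := Finset.le_sup (f := id) ht
  rw [h, Finset.subset_empty] at htu
  simp [htu] at htG

theorem starU_subset_lowerClosure {s t : Set (Finset V)} (h : s ⊆ lowerClosure t) :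
    starU s ⊆ lowerClosure (starU t) := by
  rintro u ⟨T, hT, hTs, rfl⟩
  have h' : ∀ a ∈ s, ∃ b ∈ t, a ≤ b := fun a ha => mem_lowerClosure.mp (h ha)
  choose! f hft haf using h'
  refine mem_lowerClosure.mpr ⟨T.sup f, ⟨T.image f, hT.image f, ?_, ?_⟩, ?_⟩
  · rw [Finset.coe_image, Set.image_subset_iff]
    exact fun a ha => hft a (hTs ha)
  · rw [Finset.sup_image]; rfl
  · exact Finset.sup_mono_fun fun a ha => haf a (hTs ha)

theorem starU_union_subset (s t : Set (Finset V)) :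
    starU (s ∪ t) ⊆ starU s ∪ starU t ∪ bin (starU s) (starU t) := by
  classical
  rintro u ⟨T, hT, hTst, rfl⟩
  set Ts := T.filter (· ∈ s)
  set Tt := T.filter (· ∉ s)
  have hTs : (↑Ts : Set (Finset V)) ⊆ s := fun a ha => (Finset.mem_filter.mp ha).2
  have hTt : (↑Tt : Set (Finset V)) ⊆ t := fun a ha =>
    (hTst (Finset.mem_filter.mp ha).1).resolve_left (Finset.mem_filter.mp ha).2
  have hsplit : T = Ts ∪ Tt := (Finset.filter_union_filter_not_eq _ T).symm
  rcases Ts.eq_empty_or_nonempty with hs | hs <;>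
    rcases Tt.eq_empty_or_nonempty with ht | ht
  · simp [hsplit, hs, ht] at hT
  · exact Or.inl <| Or.inr ⟨Tt, ht, hTt, by simp [hsplit, hs]⟩
  · exact Or.inl <| Or.inl ⟨Ts, hs, hTs, by simp [hsplit, ht]⟩
  · refine Or.inr ⟨_, ⟨Ts, hs, hTs, rfl⟩, _, ⟨Tt, ht, hTt, rfl⟩, ?_⟩
    rw [hsplit, Finset.sup_union]; rfl

/-- Worst-case covering:
    ((↓cl ∪ sh)_G)* ⊆ ↓(cl_G* ∪ (cl_G* ⊎ sh_G*)) ∪ (sh_G)*. -/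
theorem worst_case_cover (cl sh : Set (Finset V)) (G : Finset V) :
    starU (relG G (conc cl ∪ sh)) ⊆
      conc (starU (relG G cl) ∪ bin (starU (relG G cl)) (starU (relG G sh)))
        ∪ starU (relG G sh) := by
  have hcl := starU_subset_lowerClosure (relG_conc_subset_lowerClosure G cl)
  intro u hu
  rw [relG_union] at hu
  rcases starU_union_subset _ _ hu with (hc | hs) | ⟨a, ha, b, hb, rfl⟩
  · obtain ⟨D, hD, huD⟩ := mem_lowerClosure.mp (hcl hc)
    exact Or.inl <| mem_conc.mpr ⟨⟨D, Or.inl hD, huD⟩, ne_empty_of_mem_starU_relG hc⟩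
  · exact Or.inr hs
  · obtain ⟨D, hD, haD⟩ := mem_lowerClosure.mp (hcl ha)
    refine Or.inl <| mem_conc.mpr ⟨⟨D ∪ b, Or.inr ⟨D, hD, b, hb, rfl⟩, ?_⟩, ?_⟩
    · exact Finset.union_subset_union haD subset_rfl
    · exact fun h => ne_empty_of_mem_starU_relG ha (Finset.union_eq_empty.mp h).1
end

section
/- Coverage lemma for the clique part of extend: let cl' and cl₂ be clique sets and G a finite set of variables. If u ∈ ↓cl' and u ∩ G ∈ ↓cl₂, then u ∈ ↓{(C ∩ D) ∪ (C \ G) : C ∈ cl', D ∈ cl₂}. -/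
variable {V : Type*} [DecidableEq V]

theorem le_inf_sup_sdiff_of_le {α : Type*} [GeneralizedBooleanAlgebra α] {u c d g : α}
    (huc : u ≤ c) (hud : u ⊓ g ≤ d) : u ≤ (c ⊓ d) ⊔ (c \ g) :=
  calc u = (u ⊓ g) ⊔ (u \ g) := (sup_inf_sdiff u g).symm
    _ ≤ (c ⊓ d) ⊔ (c \ g) :=
      sup_le_sup (le_inf (inf_le_left.trans huc) hud) (sdiff_le_sdiff_right huc)

/-- If u ∈ ↓cl' and u ∩ G ∈ ↓cl₂ then
    u ∈ ↓{(C ∩ D) ∪ (C \ G) : C ∈ cl', D ∈ cl₂}. -/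
theorem extcl_cover (cl' cl₂ : Set (Finset V)) (G : Finset V) (u : Finset V)
    (h₁ : u ∈ conc cl') (h₂ : u ∩ G ∈ conc cl₂) :
    u ∈ conc {e | ∃ C ∈ cl', ∃ D ∈ cl₂, e = (C ∩ D) ∪ (C \ G)} := by
  obtain ⟨C, hC, huC, hu⟩ := Set.mem_iUnion₂.1 h₁
  obtain ⟨D, hD, huD, -⟩ := Set.mem_iUnion₂.1 h₂
  exact Set.mem_iUnion₂.2 ⟨_, ⟨C, hC, D, hD, rfl⟩, le_inf_sup_sdiff_of_le huC huD, hu⟩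
end

section
/- Soundness of amgu for Clique-Sharing, first case: let x be a variable, T a finite set of variables, cl a clique set and sh a sharing set. If no clique of cl contains x and no clique of cl intersects T, then amgu(x, T, ↓cl ∪ sh) = ↓cl ∪ amgu(x, T, sh). -/
variable {V : Type*} [DecidableEq V]

/-! A clique set avoiding `{x} ∪ T` concretizes to groups that `amgu x T` neither selects nor
combines, so they pass through unification unchanged. -/

theorem inter_eq_empty_of_mem_conc {cl : Set (Finset V)} {G : Finset V}
    (h : ∀ C ∈ cl, C ∩ G = ∅) {u : Finset V} (hu : u ∈ conc cl) : u ∩ G = ∅ := by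
  simp only [conc, pow0, Set.mem_iUnion, Set.mem_ofPred_eq] at hu
  obtain ⟨C, hC, hsub, -⟩ := hu
  exact Finset.subset_empty.1 (h C hC ▸ Finset.inter_subset_inter_right hsub)

theorem inter_eq_empty_of_subset {u G G' : Finset V} (hG : G' ⊆ G) (h : u ∩ G = ∅) :
    u ∩ G' = ∅ :=
  Finset.subset_empty.1 (h ▸ Finset.inter_subset_inter_left hG)

theorem relG_union_of_inter_eq_empty {G : Finset V} {s t : Set (Finset V)}
    (h : ∀ u ∈ s, u ∩ G = ∅) : relG G (s ∪ t) = relG G t := by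
  ext u
  simp only [relG, Set.mem_ofPred_eq, Set.mem_union]
  constructor
  · rintro ⟨hu | hu, hne⟩
    · exact absurd (h u hu) hne
    · exact ⟨hu, hne⟩
  · exact fun ⟨hu, hne⟩ => ⟨Or.inr hu, hne⟩

theorem sdiff_relG_of_inter_eq_empty {G : Finset V} {s t : Set (Finset V)}
    (h : ∀ u ∈ s, u ∩ G = ∅) : s \ relG G t = s :=
  sdiff_eq_left.2 <| Set.disjoint_left.2 fun u hu hrel => hrel.2 (h u hu)

theorem amgu_union_of_inter_eq_empty {x : V} {T : Finset V} {s sh : Set (Finset V)}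
    (h : ∀ u ∈ s, u ∩ ({x} ∪ T) = ∅) : amgu x T (s ∪ sh) = s ∪ amgu x T sh := by
  have hsub : ∀ {G}, G ⊆ {x} ∪ T → ∀ u ∈ s, u ∩ G = ∅ :=
    fun hG u hu => inter_eq_empty_of_subset hG (h u hu)
  rw [amgu, amgu, relG_union_of_inter_eq_empty h,
    relG_union_of_inter_eq_empty (hsub Finset.subset_union_left),
    relG_union_of_inter_eq_empty (hsub Finset.subset_union_right),
    Set.union_sdiff_distrib, sdiff_relG_of_inter_eq_empty h, Set.union_assoc]

/-- amgu soundness, first case: cl_x = cl_t = ∅. -/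
theorem amgu_clique_case1 (x : V) (T : Finset V) (cl sh : Set (Finset V))
    (hx : ∀ C ∈ cl, x ∉ C) (hT : ∀ C ∈ cl, C ∩ T = ∅) :
    amgu x T (conc cl ∪ sh) = conc cl ∪ amgu x T sh := by
  have hclique : ∀ C ∈ cl, C ∩ ({x} ∪ T) = ∅ := fun C hC => by
    rw [Finset.inter_union_distrib_left, hT C hC, Finset.union_empty,
      Finset.inter_singleton_of_notMem (hx C hC)]
  exact amgu_union_of_inter_eq_empty fun u hu => inter_eq_empty_of_mem_conc hclique hu
end

section
/- Soundness of amgu for Clique-Sharing, second case: let x be a variable, T a finite set of variables, cl a clique set and sh a sharing set. If no clique of cl contains x and no sharing group of sh contains x, then amgu(x, T, ↓cl ∪ sh) = ↓(rel̄({x} ∪ T, cl)) ∪ (sh \ sh_{{x}∪T}). -/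
variable {V : Type*} [DecidableEq V]

/-- amgu soundness, second case: cl_x = sh_x = ∅. -/
theorem amgu_clique_case2 (x : V) (T : Finset V) (cl sh : Set (Finset V))
    (hx : ∀ C ∈ cl, x ∉ C) (hsh : ∀ u ∈ sh, x ∉ u) :
    amgu x T (conc cl ∪ sh) =
      conc (relbar ({x} ∪ T) cl) ∪ (sh \ relG ({x} ∪ T) sh) := by

  have hrel : relG {x} (conc cl ∪ sh) = ∅ := by
    ext u
    simp only [relG, Set.mem_setOf_eq, Set.mem_union, Set.mem_empty_iff_false, iff_false,
      not_and, not_not]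
    rintro (h | h)
    · simp only [conc, Set.mem_iUnion, pow0, Set.mem_setOf_eq] at h
      obtain ⟨C, hC, hsub, -⟩ := h
      apply Finset.eq_empty_of_forall_notMem
      intro a ha
      simp only [Finset.mem_inter, Finset.mem_singleton] at ha
      exact hx C hC (ha.2 ▸ hsub ha.1)
    · apply Finset.eq_empty_of_forall_notMem
      intro a ha
      simp only [Finset.mem_inter, Finset.mem_singleton] at ha
      exact hsh u h (ha.2 ▸ ha.1)
  have hstar : starU (relG {x} (conc cl ∪ sh)) = ∅ := by
    rw [hrel]
    ext u
    simp only [starU, Set.mem_setOf_eq, Set.mem_empty_iff_false, iff_false]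
    rintro ⟨t, ⟨a, ha⟩, hsub, -⟩
    exact hsub ha
  have hbin : bin (starU (relG {x} (conc cl ∪ sh))) (starU (relG T (conc cl ∪ sh))) = ∅ := by
    rw [hstar]
    ext u
    simp [bin]
  rw [amgu, hbin, Set.union_empty]
  ext u
  simp only [Set.mem_diff, Set.mem_union, relG, Set.mem_setOf_eq, not_and, not_not]
  constructor
  · rintro ⟨h | h, hdis⟩
    · left
      simp only [conc, Set.mem_iUnion, pow0, Set.mem_setOf_eq] at h ⊢
      obtain ⟨C, hC, hsub, hne⟩ := h
      have hd := hdis (Or.inl (by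
        simp only [conc, Set.mem_iUnion, pow0, Set.mem_setOf_eq]
        exact ⟨C, hC, hsub, hne⟩))
      refine ⟨C \ ({x} ∪ T), ⟨⟨C, hC, rfl⟩, ?_⟩, ?_, hne⟩
      · intro hemp
        obtain ⟨a, ha⟩ := Finset.nonempty_iff_ne_empty.mpr hne
        have : a ∈ C \ ({x} ∪ T) := by
          simp only [Finset.mem_sdiff]
          refine ⟨hsub ha, fun hmem => ?_⟩
          have : a ∈ u ∩ ({x} ∪ T) := Finset.mem_inter.mpr ⟨ha, hmem⟩
          simp only [hd, Finset.notMem_empty] at this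
        simp only [hemp, Finset.notMem_empty] at this
      · intro a ha
        simp only [Finset.mem_sdiff]
        refine ⟨hsub ha, fun hmem => ?_⟩
        have : a ∈ u ∩ ({x} ∪ T) := Finset.mem_inter.mpr ⟨ha, hmem⟩
        simp only [hd, Finset.notMem_empty] at this
    · right
      exact ⟨h, fun _ => hdis (Or.inr h)⟩
  · rintro (h | ⟨h, hdis⟩)
    · simp only [conc, Set.mem_iUnion, pow0, Set.mem_setOf_eq, relbar] at h
      obtain ⟨D, ⟨⟨C, hC, rfl⟩, hDne⟩, hsub, hne⟩ := h
      constructor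
      · left
        simp only [conc, Set.mem_iUnion, pow0, Set.mem_setOf_eq]
        exact ⟨C, hC, fun a ha => (Finset.mem_sdiff.mp (hsub ha)).1, hne⟩
      · intro _
        apply Finset.eq_empty_of_forall_notMem
        intro a ha
        simp only [Finset.mem_inter] at ha
        exact (Finset.mem_sdiff.mp (hsub ha.1)).2 ha.2
    · exact ⟨Or.inr h, fun _ => hdis h⟩
end

section
/- Soundness of the free-variable case of abstract unification for Clique-Sharing+Freeness: let x be a variable, T a finite set of variables, cl a clique set and sh a sharing set, and let S = ↓cl ∪ sh. Then (S \ S_{{x}∪T}) ∪ (S_{{x}} ⊎ S_T) ⊆ ↓(rel̄({x} ∪ T, cl) ∪ ((cl_{{x}} ∪ sh_{{x}}) ⊎ cl_T) ∪ (cl_{{x}} ⊎ sh_T)) ∪ ((sh \ sh_{{x}∪T}) ∪ (sh_{{x}} ⊎ sh_T)). -/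
variable {V : Type*} [DecidableEq V]

/-- Soundness of the free-variable case of abstract unification for
    Clique-Sharing+Freeness. -/
theorem amgu_free_sound (x : V) (T : Finset V) (cl sh : Set (Finset V)) :
    ((conc cl ∪ sh) \ relG ({x} ∪ T) (conc cl ∪ sh))
      ∪ bin (relG {x} (conc cl ∪ sh)) (relG T (conc cl ∪ sh)) ⊆
    conc (relbar ({x} ∪ T) cl
          ∪ bin (relG {x} cl ∪ relG {x} sh) (relG T cl)
          ∪ bin (relG {x} cl) (relG T sh))
      ∪ ((sh \ relG ({x} ∪ T) sh) ∪ bin (relG {x} sh) (relG T sh)) := by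

  intro u hu
  have memconc : ∀ (s : Set (Finset V)) (v : Finset V),
      v ∈ conc s ↔ ∃ C ∈ s, v ⊆ C ∧ v ≠ ∅ := by
    intro s v
    simp [conc, pow0]; tauto
  rcases hu with ⟨hS, hnot⟩ | ⟨a, ⟨haS, hax⟩, b, ⟨hbS, hbT⟩, rfl⟩
  · have hcap : u ∩ ({x} ∪ T) = ∅ := by
      by_contra h; exact hnot ⟨hS, h⟩
    rcases hS with hc | hs
    · rcases (memconc cl u).1 hc with ⟨C, hC, hsub, hne⟩
      left
      refine (memconc _ u).2 ⟨C \ ({x} ∪ T), Or.inl (Or.inl ⟨⟨C, hC, rfl⟩, ?_⟩), ?_, hne⟩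
      · intro h
        apply hne
        have : u ⊆ C \ ({x} ∪ T) := by
          intro y hy
          refine Finset.mem_sdiff.2 ⟨hsub hy, fun hy' => ?_⟩
          have : y ∈ u ∩ ({x} ∪ T) := Finset.mem_inter.2 ⟨hy, hy'⟩
          rw [hcap] at this; simp at this
        rw [h] at this
        exact Finset.subset_empty.1 this
      · intro y hy
        refine Finset.mem_sdiff.2 ⟨hsub hy, fun hy' => ?_⟩
        have : y ∈ u ∩ ({x} ∪ T) := Finset.mem_inter.2 ⟨hy, hy'⟩
        rw [hcap] at this; simp at this
    · exact Or.inr (Or.inl ⟨hs, fun h => h.2 hcap⟩)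
  · -- bin case
    have hane : a ≠ ∅ := by
      intro h; apply hax; simp [h]
    have hbne : b ≠ ∅ := by
      intro h; apply hbT; simp [h]
    rcases haS with hac | has
    · rcases (memconc cl a).1 hac with ⟨A, hA, hasub, _⟩
      have hAx : A ∩ {x} ≠ ∅ := by
        intro h
        apply hax
        rw [← Finset.subset_empty, ← h]
        exact Finset.inter_subset_inter hasub le_rfl
      rcases hbS with hbc | hbs
      · rcases (memconc cl b).1 hbc with ⟨B, hB, hbsub, _⟩
        have hBT : B ∩ T ≠ ∅ := by
          intro h
          apply hbT
          rw [← Finset.subset_empty, ← h]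
          exact Finset.inter_subset_inter hbsub le_rfl
        left
        refine (memconc _ _).2 ⟨A ∪ B, Or.inl (Or.inr ⟨A, Or.inl ⟨hA, hAx⟩, B, ⟨hB, hBT⟩, rfl⟩), Finset.union_subset_union hasub hbsub, ?_⟩
        intro h
        apply hane
        rw [← Finset.subset_empty, ← h]
        exact Finset.subset_union_left
      · left
        refine (memconc _ _).2 ⟨A ∪ b, Or.inr ⟨A, ⟨hA, hAx⟩, b, ⟨hbs, hbT⟩, rfl⟩, Finset.union_subset_union hasub le_rfl, ?_⟩
        intro h
        apply hane
        rw [← Finset.subset_empty, ← h]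
        exact Finset.subset_union_left
    · rcases hbS with hbc | hbs
      · rcases (memconc cl b).1 hbc with ⟨B, hB, hbsub, _⟩
        have hBT : B ∩ T ≠ ∅ := by
          intro h
          apply hbT
          rw [← Finset.subset_empty, ← h]
          exact Finset.inter_subset_inter hbsub le_rfl
        left
        refine (memconc _ _).2 ⟨a ∪ B, Or.inl (Or.inr ⟨a, Or.inr ⟨has, hax⟩, B, ⟨hB, hBT⟩, rfl⟩), Finset.union_subset_union le_rfl hbsub, ?_⟩
        intro h
        apply hane
        rw [← Finset.subset_empty, ← h]
        exact Finset.subset_union_left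
      · exact Or.inr (Or.inr ⟨a, ⟨has, hax⟩, b, ⟨hbs, hbT⟩, rfl⟩)
end

section
/- Soundness of the linear case (cl_T ≠ ∅) of abstract unification for Clique-Sharing+Freeness: let x be a variable, T a finite set of variables, cl a clique set and sh a sharing set such that some clique of cl intersects T, and let S = ↓cl ∪ sh. Then (S \ S_{{x}∪T}) ∪ (S_{{x}} ⊎ S_T*) ⊆ ↓(rel̄({x} ∪ T, cl) ∪ ((cl_{{x}} ∪ sh_{{x}}) ⊎ {⋃(cl_T ∪ sh_T)})) ∪ (sh \ sh_{{x}∪T}), where ⋃(cl_T ∪ sh_T) is the union of all cliques and sharing groups intersecting T. -/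
variable {V : Type*} [DecidableEq V]

/-- Soundness of the linear case (cl_T ≠ ∅) of abstract unification for
    Clique-Sharing+Freeness. -/
theorem amgu_linear_sound_nonempty (x : V) (T : Finset V) (cl sh : Set (Finset V))
    (U : Finset V)
    (hclT : (relG T cl).Nonempty)
    (hU : (↑U : Set V) = ⋃ u ∈ (relG T cl ∪ relG T sh), (↑u : Set V)) :
    ((conc cl ∪ sh) \ relG ({x} ∪ T) (conc cl ∪ sh))
      ∪ bin (relG {x} (conc cl ∪ sh)) (starU (relG T (conc cl ∪ sh))) ⊆
    conc (relbar ({x} ∪ T) cl ∪ bin (relG {x} cl ∪ relG {x} sh) {U})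
      ∪ (sh \ relG ({x} ∪ T) sh) := by
  have hsubU : ∀ v ∈ relG T (conc cl ∪ sh), v ⊆ U := by
    rintro v ⟨hv, hvT⟩ y hy
    rw [← Finset.mem_coe, hU]
    rcases hv with hvc | hvs
    · simp only [conc, Set.mem_iUnion, pow0, Set.mem_setOf_eq] at hvc
      rcases hvc with ⟨C, hC, hvC, _⟩
      refine Set.mem_biUnion (Or.inl ⟨hC, ?_⟩) (hvC hy)
      obtain ⟨z, hz⟩ := Finset.nonempty_iff_ne_empty.mpr hvT
      rw [Finset.mem_inter] at hz
      exact Finset.nonempty_iff_ne_empty.mp ⟨z, Finset.mem_inter.mpr ⟨hvC hz.1, hz.2⟩⟩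
    · exact Set.mem_biUnion (Or.inr ⟨hvs, hvT⟩) hy
  rintro u (⟨hS, hnot⟩ | ⟨a, ⟨ha, hax⟩, b, ⟨T', hT'ne, hT'sub, rfl⟩, rfl⟩)
  · have hdis : u ∩ ({x} ∪ T) = ∅ := by
      by_contra h
      exact hnot ⟨hS, h⟩
    rcases hS with hc | hs
    · left
      simp only [conc, Set.mem_iUnion, pow0, Set.mem_setOf_eq] at hc ⊢
      rcases hc with ⟨C, hC, huC, hune⟩
      have hsub : u ⊆ C \ ({x} ∪ T) := by
        intro y hy
        rw [Finset.mem_sdiff]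
        refine ⟨huC hy, fun hmem => ?_⟩
        have : y ∈ u ∩ ({x} ∪ T) := Finset.mem_inter.mpr ⟨hy, hmem⟩
        rw [hdis] at this; simp at this
      refine ⟨C \ ({x} ∪ T), Or.inl ⟨⟨C, hC, rfl⟩, ?_⟩, hsub, hune⟩
      obtain ⟨z, hz⟩ := Finset.nonempty_iff_ne_empty.mpr hune
      exact Finset.nonempty_iff_ne_empty.mp ⟨z, hsub hz⟩
    · right
      exact ⟨hs, fun ⟨_, h⟩ => (h hdis)⟩
  · left
    have hxa : x ∈ a := by
      obtain ⟨z, hz⟩ := Finset.nonempty_iff_ne_empty.mpr hax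
      rw [Finset.mem_inter, Finset.mem_singleton] at hz
      exact hz.2 ▸ hz.1
    have hbU : T'.sup id ⊆ U := Finset.sup_le fun v hv => hsubU v (hT'sub hv)
    have hA : ∃ A, A ∈ relG {x} cl ∪ relG {x} sh ∧ a ⊆ A := by
      rcases ha with hc | hs
      · simp only [conc, Set.mem_iUnion, pow0, Set.mem_setOf_eq] at hc
        rcases hc with ⟨C, hC, haC, _⟩
        refine ⟨C, Or.inl ⟨hC, Finset.nonempty_iff_ne_empty.mp
          ⟨x, Finset.mem_inter.mpr ⟨haC hxa, Finset.mem_singleton_self x⟩⟩⟩, haC⟩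
      · exact ⟨a, Or.inr ⟨hs, hax⟩, le_refl a⟩
    obtain ⟨A, hAmem, haA⟩ := hA
    simp only [conc, Set.mem_iUnion, pow0, Set.mem_setOf_eq]
    refine ⟨A ∪ U, Or.inr ⟨A, hAmem, U, rfl, rfl⟩, ?_, ?_⟩
    · exact Finset.union_subset (haA.trans Finset.subset_union_left)
        (hbU.trans Finset.subset_union_right)
    · intro h
      have : x ∈ (∅ : Finset V) := h ▸ Finset.mem_union_left _ hxa
      simp at this
end

section
/- Inclusion–exclusion formula for the count [S] used in the clique-detection algorithm: let S be a finite set of variables and cl a finite family of finite sets of variables. Then the number of nonempty subsets of S that are contained in at least one member of cl equals Σ over nonempty subfamilies A ⊆ cl of (−1)^{|A|+1} · (2^{|S ∩ ⋂_{C∈A} C|} − 1). -/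
/-!
A nonempty `u ⊆ S` lies in some `C ∈ cl` iff it is a nonempty subset of some `S ∩ C`, so the
count is the size of the union of the families `℘⁰(S ∩ C)`, `C ∈ cl`. Inclusion–exclusion turns
this into an alternating sum over nonempty subfamilies `A`, and the intersection of the
`℘⁰(S ∩ C)` over `C ∈ A` is `℘⁰(S ∩ ⋂ A)`, which has `2 ^ |S ∩ ⋂ A| - 1` elements.
-/

variable {V : Type*} [DecidableEq V]

namespace Finset

variable {α : Type*} [DecidableEq α]

theorem card_powerset_erase_empty (s : Finset α) :
    ((s.powerset.erase ∅).card : ℤ) = 2 ^ s.card - 1 := by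
  rw [card_erase_of_mem (empty_mem_powerset s), card_powerset,
    Nat.cast_sub Nat.one_le_two_pow]
  norm_num

theorem filter_powerset_ne_empty_exists_subset_eq_biUnion (S : Finset α)
    (cl : Finset (Finset α)) :
    S.powerset.filter (fun u => u ≠ ∅ ∧ ∃ C ∈ cl, u ⊆ C) =
      cl.biUnion fun C => (S ∩ C).powerset.erase ∅ := by
  ext u
  simp only [mem_filter, mem_powerset, mem_biUnion, mem_erase, subset_inter_iff]
  tauto

theorem inf'_powerset_inter_erase_empty (S : Finset α) (A : Finset (Finset α))
    (hA : A.Nonempty) :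
    A.inf' hA (fun C => (S ∩ C).powerset.erase ∅) =
      (S.filter fun y => ∀ C ∈ A, y ∈ C).powerset.erase ∅ := by
  ext u
  simp only [mem_inf', mem_erase, mem_powerset, subset_iff, mem_inter, mem_filter]
  obtain ⟨C₀, hC₀⟩ := hA
  constructor
  · intro h
    exact ⟨(h C₀ hC₀).1, fun y hy => ⟨((h C₀ hC₀).2 hy).1, fun C hC => ((h C hC).2 hy).2⟩⟩
  · rintro ⟨hu, hsub⟩ C hC
    exact ⟨hu, fun y hy => ⟨(hsub hy).1, (hsub hy).2 C hC⟩⟩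

end Finset

open Finset in
/-- Inclusion–exclusion formula for the count [S] used in clique detection. -/
theorem clique_count_inclusion_exclusion (S : Finset V) (cl : Finset (Finset V)) :
    (((S.powerset.filter (fun u => u ≠ ∅ ∧ ∃ C ∈ cl, u ⊆ C)).card : ℤ)) =
      ∑ A ∈ cl.powerset.filter (fun A => A ≠ ∅),
        (-1 : ℤ) ^ (A.card + 1) *
          (2 ^ ((S.filter (fun y => ∀ C ∈ A, y ∈ C)).card) - 1) := by
  rw [filter_powerset_ne_empty_exists_subset_eq_biUnion, inclusion_exclusion_card_biUnion]
  simp only [inf'_powerset_inter_erase_empty, card_powerset_erase_empty]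
  rw [sum_coe_sort (cl.powerset.filter (·.Nonempty)) fun A =>
    (-1 : ℤ) ^ (A.card + 1) * (2 ^ (S.filter fun y => ∀ C ∈ A, y ∈ C).card - 1)]
  simp only [nonempty_iff_ne_empty]
end

section
/- A normalization step preserves the represented sharing: let cl be a clique set, sh a sharing set, and S a finite set of variables such that every nonempty subset of S belongs to ↓cl ∪ sh. Then adding S as a clique and deleting its subsets from the sharing set does not change the represented sharing: ↓(cl ∪ {S}) ∪ (sh \ ℘⁰(S)) = ↓cl ∪ sh. -/
variable {V : Type*} [DecidableEq V]

/-- A normalization step preserves the represented sharing. -/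
theorem normalize_step_preserves (cl sh : Set (Finset V)) (S : Finset V)
    (h : ∀ u : Finset V, u ⊆ S → u ≠ ∅ → u ∈ conc cl ∪ sh) :
    conc (cl ∪ {S}) ∪ (sh \ pow0 S) = conc cl ∪ sh := by
  ext u
  simp only [Set.mem_union, conc, Set.mem_iUnion, Set.mem_diff, pow0, Set.mem_setOf_eq,
    Set.mem_singleton_iff]
  constructor
  · rintro ((⟨C, (hC | rfl), hu⟩) | ⟨hu, -⟩)
    · exact Or.inl ⟨C, hC, hu⟩
    · rcases h u hu.1 hu.2 with h' | h'
      · left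
        simpa only [conc, Set.mem_iUnion, pow0, Set.mem_setOf_eq] using h'
      · exact Or.inr h'
    · exact Or.inr hu
  · rintro ((⟨C, hC, hu⟩) | hsh)
    · exact Or.inl ⟨C, Or.inl hC, hu⟩
    · by_cases hp : u ⊆ S ∧ u ≠ ∅
      · exact Or.inl ⟨S, Or.inr rfl, hp⟩
      · exact Or.inr ⟨hsh, hp⟩
end
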